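/- arXiv:2110.14426 — 4 statements merged into one kernel-verified Lean document; each statement's English description precedes it below -/
import Mathlib

section
/- Let d ≥ 1, R > 0, R_y > 0 and σ₁, σ₂, σ₃ > 0. For x ∈ ℝ^d and y ∈ ℝ define the vector F(x,y) ∈ ℝ^{d(d+1)/2 + d + 1} whose blocks are t₂(x) (with entries x_j² for 1 ≤ j ≤ d and x_j x_k for 1 ≤ j < k ≤ d), (σ₁/σ₂)·y·x, and (σ₁/σ₃)·y², where the squared Euclidean distance of the t₂ blocks is counted as Σ_j (x_j² − x'_j²)² + 2 Σ_{j<k} (x_j x_k − x'_j x'_k)². Then for all x, x' ∈ ℝ^d with ‖x‖₂ ≤ R and ‖x'‖₂ ≤ R, and all y, y' ∈ ℝ with |y| ≤ R_y and |y'| ≤ R_y, one has ‖F(x,y) − F(x',y')‖₂² ≤ σ₁⁴ R_y⁴ / (2σ₂⁴) + 2R⁴ + 2σ₁² R_y² R² / σ₂² + σ₁² R_y⁴ / σ₃². -/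
set_option maxHeartbeats 1000000

open scoped RealInnerProductSpace

lemma scalar_bound (R Ry c2 k2 a a' s y y' : ℝ) (hc2 : 0 < c2) (hk2 : 0 < k2)
    (ha : a ≤ R ^ 2) (ha' : a' ≤ R ^ 2) (ha0 : 0 ≤ a) (ha'0 : 0 ≤ a')
    (hy2 : y ^ 2 ≤ Ry ^ 2) (hy'2 : y' ^ 2 ≤ Ry ^ 2) :
    (a ^ 2 + a' ^ 2 - 2 * s ^ 2) + c2 * (y ^ 2 * a + y' ^ 2 * a' - 2 * (y * y') * s)
      + k2 * (y ^ 2 - y' ^ 2) ^ 2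
      ≤ c2 ^ 2 * Ry ^ 4 / 2 + 2 * R ^ 4 + 2 * c2 * Ry ^ 2 * R ^ 2 + k2 * Ry ^ 4 := by
  have e1 : a ^ 2 + a' ^ 2 ≤ 2 * R ^ 4 := by nlinarith
  have hyy : (y * y') ^ 2 ≤ Ry ^ 4 := by nlinarith [sq_nonneg y, sq_nonneg y']
  have e2 : -2 * s ^ 2 - 2 * c2 * (y * y') * s ≤ c2 ^ 2 * Ry ^ 4 / 2 := by
    nlinarith [sq_nonneg (2 * s + c2 * (y * y')),
      mul_le_mul_of_nonneg_left hyy (sq_nonneg c2)]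
  have e3 : c2 * (y ^ 2 * a) ≤ c2 * (Ry ^ 2 * R ^ 2) :=
    mul_le_mul_of_nonneg_left (mul_le_mul hy2 ha ha0 (sq_nonneg Ry)) hc2.le
  have e4 : c2 * (y' ^ 2 * a') ≤ c2 * (Ry ^ 2 * R ^ 2) :=
    mul_le_mul_of_nonneg_left (mul_le_mul hy'2 ha' ha'0 (sq_nonneg Ry)) hc2.le
  have e5 : k2 * (y ^ 2 - y' ^ 2) ^ 2 ≤ k2 * Ry ^ 4 := by
    have h7 : (y ^ 2 - y' ^ 2) ^ 2 ≤ Ry ^ 4 := by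
      nlinarith [sq_nonneg y, sq_nonneg y',
        mul_nonneg (sub_nonneg.2 hy2) (sub_nonneg.2 hy'2)]
    exact mul_le_mul_of_nonneg_left h7 hk2.le
  linarith [e1, e2, e3, e4, e5]

lemma double_sum_split {d : ℕ} (f : Fin d → Fin d → ℝ) (hf : ∀ j k, f j k = f k j) :
    ∑ j, ∑ k, f j k = ∑ j, f j j + 2 * ∑ j, ∑ k ∈ Finset.Ioi j, f j k := by
  have h1 : ∀ j : Fin d, ∑ k, f j k
      = f j j + (∑ k ∈ Finset.Ioi j, f j k + ∑ k ∈ Finset.Iio j, f j k) := by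
    intro j
    have huniv : (Finset.univ : Finset (Fin d))
        = insert j (Finset.Ioi j ∪ Finset.Iio j) := by
      ext k
      simp only [Finset.mem_univ, Finset.mem_insert, Finset.mem_union, Finset.mem_Ioi,
        Finset.mem_Iio, true_iff]
      rcases lt_trichotomy k j with h | h | h
      · exact Or.inr (Or.inr h)
      · exact Or.inl h
      · exact Or.inr (Or.inl h)
    rw [huniv, Finset.sum_insert (by simp), Finset.sum_union (Finset.disjoint_Ioi_Iio j)]
  have h2 : ∑ j, ∑ k ∈ Finset.Iio j, f j k = ∑ j, ∑ k ∈ Finset.Ioi j, f j k := by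
    rw [Finset.sum_comm' (t' := Finset.univ) (s' := fun k => Finset.Ioi k)]
    · simp_rw [fun j k => hf j k]
    · intro j k
      simp [Finset.mem_Iio, Finset.mem_Ioi, and_comm]
  simp_rw [h1, Finset.sum_add_distrib, h2]
  ring

/-- Lemma 1 (sensitivity of linear-regression sufficient statistics):
the squared Euclidean distance between F(x,y) and F(x',y'), whose blocks are
t₂(x), (σ₁/σ₂)·y·x and (σ₁/σ₃)·y², is bounded by the stated quantity. -/
theorem linear_regression_sensitivity
    (d : ℕ) (hd : 1 ≤ d) (R Ry σ₁ σ₂ σ₃ : ℝ)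
    (hR : 0 < R) (hRy : 0 < Ry) (hσ₁ : 0 < σ₁) (hσ₂ : 0 < σ₂) (hσ₃ : 0 < σ₃)
    (x x' : EuclideanSpace ℝ (Fin d)) (y y' : ℝ)
    (hx : ‖x‖ ≤ R) (hx' : ‖x'‖ ≤ R) (hy : |y| ≤ Ry) (hy' : |y'| ≤ Ry) :
    ((∑ j, (x j ^ 2 - x' j ^ 2) ^ 2
        + 2 * ∑ j, ∑ k ∈ Finset.Ioi j, (x j * x k - x' j * x' k) ^ 2)
      + (σ₁ / σ₂) ^ 2 * ∑ j, (y * x j - y' * x' j) ^ 2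
      + (σ₁ / σ₃) ^ 2 * (y ^ 2 - y' ^ 2) ^ 2)
      ≤ σ₁ ^ 4 * Ry ^ 4 / (2 * σ₂ ^ 4) + 2 * R ^ 4
        + 2 * σ₁ ^ 2 * Ry ^ 2 * R ^ 2 / σ₂ ^ 2 + σ₁ ^ 2 * Ry ^ 4 / σ₃ ^ 2 := by
  set a := ∑ j, x j ^ 2 with ha_def
  set a' := ∑ j, x' j ^ 2 with ha'_def
  set s := ∑ j, x j * x' j with hs_def
  have hnorm : ∀ z : EuclideanSpace ℝ (Fin d), ‖z‖ ^ 2 = ∑ j, z j ^ 2 := by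
    intro z
    rw [EuclideanSpace.norm_eq, Real.sq_sqrt (by positivity)]
    simp [sq_abs]
  have ha : a ≤ R ^ 2 := by
    rw [ha_def, ← hnorm x]; exact pow_le_pow_left₀ (norm_nonneg x) hx 2
  have ha' : a' ≤ R ^ 2 := by
    rw [ha'_def, ← hnorm x']; exact pow_le_pow_left₀ (norm_nonneg x') hx' 2
  have ha0 : 0 ≤ a := Finset.sum_nonneg fun j _ => sq_nonneg _
  have ha'0 : 0 ≤ a' := Finset.sum_nonneg fun j _ => sq_nonneg _
  have hcs : s ^ 2 ≤ a * a' := Finset.sum_mul_sq_le_sq_mul_sq _ _ _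
  have hy2 : y ^ 2 ≤ Ry ^ 2 := by
    rw [← sq_abs]; exact pow_le_pow_left₀ (abs_nonneg y) hy 2
  have hy'2 : y' ^ 2 ≤ Ry ^ 2 := by
    rw [← sq_abs]; exact pow_le_pow_left₀ (abs_nonneg y') hy' 2
  have hsplit := double_sum_split (fun j k => (x j * x k - x' j * x' k) ^ 2)
    (fun j k => by ring)
  have hfull : ∑ j, ∑ k, (x j * x k - x' j * x' k) ^ 2 = a ^ 2 + a' ^ 2 - 2 * s ^ 2 := by
    have key : a ^ 2 + a' ^ 2 - 2 * s ^ 2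
        = ∑ j, ∑ k, (x j ^ 2 * x k ^ 2 + x' j ^ 2 * x' k ^ 2
            - 2 * ((x j * x' j) * (x k * x' k))) := by
      rw [ha_def, ha'_def, hs_def, sq, sq, sq, Finset.sum_mul_sum, Finset.sum_mul_sum,
        Finset.sum_mul_sum, Finset.mul_sum, ← Finset.sum_add_distrib, ← Finset.sum_sub_distrib]
      refine Finset.sum_congr rfl fun j _ => ?_
      rw [Finset.mul_sum, ← Finset.sum_add_distrib, ← Finset.sum_sub_distrib]
    rw [key]
    exact Finset.sum_congr rfl fun j _ => Finset.sum_congr rfl fun k _ => by ring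
  have hblock1 : (∑ j, (x j ^ 2 - x' j ^ 2) ^ 2)
      + 2 * ∑ j, ∑ k ∈ Finset.Ioi j, (x j * x k - x' j * x' k) ^ 2
      = a ^ 2 + a' ^ 2 - 2 * s ^ 2 := by
    have hdg : (∑ j, ((fun j k => (x j * x k - x' j * x' k) ^ 2) j j))
        = ∑ j, (x j ^ 2 - x' j ^ 2) ^ 2 :=
      Finset.sum_congr rfl fun j _ => by ring
    rw [← hfull, hsplit, hdg]
  have hblock2 : ∑ j, (y * x j - y' * x' j) ^ 2
      = y ^ 2 * a + y' ^ 2 * a' - 2 * (y * y') * s := by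
    have key : y ^ 2 * a + y' ^ 2 * a' - 2 * (y * y') * s
        = ∑ j, (y ^ 2 * x j ^ 2 + y' ^ 2 * x' j ^ 2 - 2 * (y * y') * (x j * x' j)) := by
      rw [ha_def, ha'_def, hs_def, Finset.mul_sum, Finset.mul_sum, Finset.mul_sum,
        ← Finset.sum_add_distrib, ← Finset.sum_sub_distrib]
    rw [key]
    exact Finset.sum_congr rfl fun j _ => by ring
  rw [hblock1, hblock2]
  have hc2 : (σ₁ / σ₂) ^ 2 = σ₁ ^ 2 / σ₂ ^ 2 := by rw [div_pow]
  have hk2 : (σ₁ / σ₃) ^ 2 = σ₁ ^ 2 / σ₃ ^ 2 := by rw [div_pow]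
  set c2 := σ₁ ^ 2 / σ₂ ^ 2 with hc2_def
  set k2 := σ₁ ^ 2 / σ₃ ^ 2 with hk2_def
  have hrhs1 : σ₁ ^ 4 * Ry ^ 4 / (2 * σ₂ ^ 4) = c2 ^ 2 * Ry ^ 4 / 2 := by
    rw [hc2_def]; field_simp; try ring
  have hrhs2 : 2 * σ₁ ^ 2 * Ry ^ 2 * R ^ 2 / σ₂ ^ 2 = 2 * c2 * Ry ^ 2 * R ^ 2 := by
    rw [hc2_def]; field_simp; try ring
  have hrhs3 : σ₁ ^ 2 * Ry ^ 4 / σ₃ ^ 2 = k2 * Ry ^ 4 := by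
    rw [hk2_def]; field_simp
  rw [hc2, hk2, hrhs1, hrhs2, hrhs3]
  have hc2pos : 0 < c2 := by positivity
  have hk2pos : 0 < k2 := by positivity
  have hmain := scalar_bound R Ry c2 k2 a a' s y y' hc2pos hk2pos ha ha' ha0 ha'0 hy2 hy'2
  linarith [hmain]
end

section
/- Let d ≥ 1, R_y > 0 and σ > 0. For x ∈ ℝ^d and y ∈ ℝ define F(x,y) ∈ ℝ^{d(d+1)/2 + d + 1} with blocks t₂(x), y·x, and y² (i.e., the case σ₁ = σ₂ = σ₃ = σ of the linear-regression statistic map, where the per-coordinate scalings cancel). Then for all x, x' ∈ ℝ^d with ‖x‖₂ ≤ 1 and ‖x'‖₂ ≤ 1 and all y, y' ∈ ℝ with |y| ≤ R_y and |y'| ≤ R_y, counting the squared distance of the t₂ blocks as Σ_j (x_j² − x'_j²)² + 2 Σ_{j<k} (x_j x_k − x'_j x'_k)², one has ‖F(x,y) − F(x',y')‖₂ ≤ √(3 R_y⁴ / 2 + 2 R_y² + 2). -/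
/-!
Counting each off-diagonal monomial twice makes the `t₂`-block distance the Frobenius distance
between `x xᵀ` and `x' x'ᵀ`, i.e. `‖x‖⁴ + ‖x'‖⁴ - 2⟪x, x'⟫²`, and the middle block is
`‖y x - y' x'‖²`. Adding the three blocks, the inner product enters only through
`-2⟪x, x'⟫² - 2 y y' ⟪x, x'⟫ ≤ (y y')² / 2`; the remaining terms are bounded by `‖x‖, ‖x'‖ ≤ 1`
and `y², y'² ∈ [0, Ry²]`.
-/

open scoped RealInnerProductSpace
open Finset

theorem sum_sum_eq_sum_add_two_mul_sum_sum_Ioi {ι R : Type*} [LinearOrder ι] [Fintype ι]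
    [LocallyFiniteOrderTop ι] [LocallyFiniteOrderBot ι] [CommSemiring R]
    (f : ι → ι → R) (hf : ∀ i j, f i j = f j i) :
    ∑ i, ∑ j, f i j = ∑ i, f i i + 2 * ∑ i, ∑ j ∈ Ioi i, f i j := by
  have hdiag (i : ι) : ∑ j, f i j = f i i + ∑ j ∈ {i}ᶜ, f j i := by
    rw [← add_sum_erase _ _ (mem_univ i), ← compl_singleton]
    simp_rw [hf i]
  have hoff : 2 * ∑ i, ∑ j ∈ Ioi i, f i j = ∑ i, ∑ j ∈ {i}ᶜ, f j i := by
    rw [← sum_sum_Ioi_add_eq_sum_sum_off_diag, mul_sum]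
    refine sum_congr rfl fun i _ ↦ ?_
    rw [mul_sum]
    exact sum_congr rfl fun j _ ↦ by rw [hf j i, two_mul]
  simp_rw [hdiag, sum_add_distrib, hoff]

theorem sum_sq_sub_sq_sq_add_two_mul_sum_Ioi {ι : Type*} [LinearOrder ι] [Fintype ι]
    [LocallyFiniteOrderTop ι] [LocallyFiniteOrderBot ι] (x x' : EuclideanSpace ℝ ι) :
    ∑ j, (x j ^ 2 - x' j ^ 2) ^ 2 + 2 * ∑ j, ∑ k ∈ Ioi j, (x j * x k - x' j * x' k) ^ 2
      = ‖x‖ ^ 4 + ‖x'‖ ^ 4 - 2 * ⟪x, x'⟫ ^ 2 := by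
  have h := sum_sum_eq_sum_add_two_mul_sum_sum_Ioi (fun j k ↦ (x j * x k - x' j * x' k) ^ 2)
    fun j k ↦ by ring
  simp only [← sq] at h
  rw [← h, show (4 : ℕ) = 2 * 2 by rfl, pow_mul, pow_mul, EuclideanSpace.real_norm_sq_eq,
    EuclideanSpace.real_norm_sq_eq, PiLp.inner_apply]
  simp only [RCLike.inner_apply, conj_trivial]
  rw [sq (∑ j, x j ^ 2), sq (∑ j, x' j ^ 2), sq (∑ j, x' j * x j),
    sum_mul_sum, sum_mul_sum, sum_mul_sum]
  simp only [mul_sum, ← sum_sub_distrib, ← sum_add_distrib]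
  exact sum_congr rfl fun j _ ↦ sum_congr rfl fun k _ ↦ by ring

theorem norm_smul_sub_smul_sq {E : Type*} [NormedAddCommGroup E] [InnerProductSpace ℝ E]
    (a b : ℝ) (u v : E) :
    ‖a • u - b • v‖ ^ 2 = a ^ 2 * ‖u‖ ^ 2 - 2 * (a * b) * ⟪u, v⟫ + b ^ 2 * ‖v‖ ^ 2 := by
  rw [norm_sub_sq_real, norm_smul, norm_smul, real_inner_smul_left, real_inner_smul_right,
    mul_pow, mul_pow, Real.norm_eq_abs, Real.norm_eq_abs, sq_abs, sq_abs]
  ring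

theorem sum_smul_sub_smul_sq {ι : Type*} [Fintype ι] (a b : ℝ) (u v : EuclideanSpace ℝ ι) :
    ∑ j, (a * u j - b * v j) ^ 2 = ‖a • u - b • v‖ ^ 2 := by
  simp [EuclideanSpace.real_norm_sq_eq]

theorem sensitivity_sq_le {s t c y y' R : ℝ} (hs₀ : 0 ≤ s) (hs : s ≤ 1) (ht₀ : 0 ≤ t)
    (ht : t ≤ 1) (hy : |y| ≤ R) (hy' : |y'| ≤ R) :
    s ^ 4 + t ^ 4 - 2 * c ^ 2 + (y ^ 2 * s ^ 2 - 2 * (y * y') * c + y' ^ 2 * t ^ 2)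
        + (y ^ 2 - y' ^ 2) ^ 2
      ≤ 3 * R ^ 4 / 2 + 2 * R ^ 2 + 2 := by
  have hcross : -2 * c ^ 2 - 2 * (y * y') * c ≤ (y * y') ^ 2 / 2 := by
    nlinarith [sq_nonneg (2 * c + y * y')]
  have hy2 : y ^ 2 ≤ R ^ 2 := sq_le_sq' (abs_le.mp hy).1 (abs_le.mp hy).2
  have hy'2 : y' ^ 2 ≤ R ^ 2 := sq_le_sq' (abs_le.mp hy').1 (abs_le.mp hy').2
  have hyy' : (y * y') ^ 2 ≤ R ^ 4 := by
    rw [mul_pow, show R ^ 4 = R ^ 2 * R ^ 2 by ring]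
    exact mul_le_mul hy2 hy'2 (sq_nonneg y') (sq_nonneg R)
  have hdiff : (y ^ 2 - y' ^ 2) ^ 2 ≤ R ^ 4 := by
    rw [show R ^ 4 = (R ^ 2) ^ 2 by ring]
    exact sq_le_sq' (by linarith [sq_nonneg y]) (by linarith [sq_nonneg y'])
  have hys : y ^ 2 * s ^ 2 ≤ y ^ 2 := mul_le_of_le_one_right (sq_nonneg y) (pow_le_one₀ hs₀ hs)
  have hy't : y' ^ 2 * t ^ 2 ≤ y' ^ 2 :=
    mul_le_of_le_one_right (sq_nonneg y') (pow_le_one₀ ht₀ ht)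
  linarith [pow_le_one₀ (n := 4) hs₀ hs, pow_le_one₀ (n := 4) ht₀ ht]

theorem linear_regression_sensitivity_special_case_general
    (d : ℕ) (Ry : ℝ)
    (x x' : EuclideanSpace ℝ (Fin d)) (y y' : ℝ)
    (hx : ‖x‖ ≤ 1) (hx' : ‖x'‖ ≤ 1) (hy : |y| ≤ Ry) (hy' : |y'| ≤ Ry) :
    Real.sqrt ((∑ j, (x j ^ 2 - x' j ^ 2) ^ 2
        + 2 * ∑ j, ∑ k ∈ Finset.Ioi j, (x j * x k - x' j * x' k) ^ 2)
      + ∑ j, (y * x j - y' * x' j) ^ 2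
      + (y ^ 2 - y' ^ 2) ^ 2)
      ≤ Real.sqrt (3 * Ry ^ 4 / 2 + 2 * Ry ^ 2 + 2) := by
  rw [sum_sq_sub_sq_sq_add_two_mul_sum_Ioi, sum_smul_sub_smul_sq, norm_smul_sub_smul_sq]
  exact Real.sqrt_le_sqrt (sensitivity_sq_le (norm_nonneg x) hx (norm_nonneg x') hx' hy hy')

/-- Corollary 1: the special case R = 1, σ₁ = σ₂ = σ₃ of the linear-regression
sensitivity bound.  F(x,y) has blocks t₂(x), y·x and y². -/
theorem linear_regression_sensitivity_special_case
    (d : ℕ) (hd : 1 ≤ d) (Ry σ : ℝ) (hRy : 0 < Ry) (hσ : 0 < σ)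
    (x x' : EuclideanSpace ℝ (Fin d)) (y y' : ℝ)
    (hx : ‖x‖ ≤ 1) (hx' : ‖x'‖ ≤ 1) (hy : |y| ≤ Ry) (hy' : |y'| ≤ Ry) :
    Real.sqrt ((∑ j, (x j ^ 2 - x' j ^ 2) ^ 2
        + 2 * ∑ j, ∑ k ∈ Finset.Ioi j, (x j * x k - x' j * x' k) ^ 2)
      + ∑ j, (y * x j - y' * x' j) ^ 2
      + (y ^ 2 - y' ^ 2) ^ 2)
      ≤ Real.sqrt (3 * Ry ^ 4 / 2 + 2 * Ry ^ 2 + 2) :=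
  linear_regression_sensitivity_special_case_general d Ry x x' y y' hx hx' hy hy'
end

section
/- Let b > 0, θ > 0, ε > 0 with bθ ≠ ε, and z ∈ ℝ. Set l = max(0, min(b, z)). Then ∫_0^b exp( −ε|z − x| / b ) · θ · exp(−θ x) dx = [ bθ ( exp(lθ) − exp(lε/b) ) · exp( −εz/b − lθ ) ] / (bθ − ε) + [ bθ ( exp(bθ + ε) − exp(lθ + lε/b) ) · exp( (εz − lε)/b − bθ − lθ − ε ) ] / (bθ + ε). -/
open MeasureTheory

lemma int_exp_mul (c a b : ℝ) (hc : c ≠ 0) :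
    ∫ x in a..b, Real.exp (c * x) = (Real.exp (c * b) - Real.exp (c * a)) / c := by
  rw [intervalIntegral.integral_comp_mul_left Real.exp hc, integral_exp, smul_eq_mul]
  field_simp

/-- Closed-form marginal likelihood for exponential parameter estimation under
Laplace perturbation: the integral over the continuous part [0, b] of the
clipped exponential density times the Laplace kernel. -/
theorem exponential_laplace_marginal
    (b θ ε z : ℝ) (hb : 0 < b) (hθ : 0 < θ) (hε : 0 < ε) (hne : b * θ ≠ ε)
    (l : ℝ) (hl : l = max 0 (min b z)) :
    (∫ x in (0 : ℝ)..b, Real.exp (-ε * |z - x| / b) * (θ * Real.exp (-θ * x)))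
      = b * θ * (Real.exp (l * θ) - Real.exp (l * ε / b)) *
          Real.exp (-ε * z / b - l * θ) / (b * θ - ε)
        + b * θ * (Real.exp (b * θ + ε) - Real.exp (l * θ + l * ε / b)) *
            Real.exp ((ε * z - l * ε) / b - b * θ - l * θ - ε) / (b * θ + ε) := by
  have hb' : b ≠ 0 := hb.ne'
  have h0l : (0:ℝ) ≤ l := hl ▸ le_max_left _ _
  have hlb : l ≤ b := by rw [hl]; exact max_le hb.le (min_le_left _ _)
  have hd1 : ε - b * θ ≠ 0 := fun h => hne (by linarith)
  have hd2 : ε + b * θ ≠ 0 := by positivity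
  have hc1 : ε / b - θ ≠ 0 := by
    rw [show ε / b - θ = (ε - b * θ) / b by field_simp]
    exact div_ne_zero hd1 hb'
  have hc2 : ε / b + θ ≠ 0 := by positivity
  have hcont : Continuous (fun x : ℝ => Real.exp (-ε * |z - x| / b) * (θ * Real.exp (-θ * x))) := by
    fun_prop
  have hi1 := hcont.intervalIntegrable (μ := volume) 0 l
  have hi2 := hcont.intervalIntegrable (μ := volume) l b
  rw [← intervalIntegral.integral_add_adjacent_intervals hi1 hi2]
  have e1 : (∫ x in (0:ℝ)..l, Real.exp (-ε * |z - x| / b) * (θ * Real.exp (-θ * x)))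
      = ∫ x in (0:ℝ)..l, (Real.exp (-(ε * z / b)) * θ) * Real.exp ((ε / b - θ) * x) := by
    rw [intervalIntegral.integral_of_le h0l, intervalIntegral.integral_of_le h0l]
    apply setIntegral_congr_fun measurableSet_Ioc
    intro x hx
    dsimp only
    have hxz : x ≤ z := by
      rcases le_max_iff.mp (hl ▸ hx.2) with h | h
      · linarith [hx.1]
      · exact h.trans (min_le_right _ _)
    rw [abs_of_nonneg (by linarith)]
    have key : Real.exp (-ε * (z - x) / b) * Real.exp (-θ * x)
        = Real.exp (-(ε * z / b)) * Real.exp ((ε / b - θ) * x) := by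
      rw [← Real.exp_add, ← Real.exp_add]; congr 1; field_simp; ring
    calc Real.exp (-ε * (z - x) / b) * (θ * Real.exp (-θ * x))
        = θ * (Real.exp (-ε * (z - x) / b) * Real.exp (-θ * x)) := by ring
      _ = θ * (Real.exp (-(ε * z / b)) * Real.exp ((ε / b - θ) * x)) := by rw [key]
      _ = Real.exp (-(ε * z / b)) * θ * Real.exp ((ε / b - θ) * x) := by ring
  have e2 : (∫ x in l..b, Real.exp (-ε * |z - x| / b) * (θ * Real.exp (-θ * x)))
      = ∫ x in l..b, (Real.exp (ε * z / b) * θ) * Real.exp (-(ε / b + θ) * x) := by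
    rw [intervalIntegral.integral_of_le hlb, intervalIntegral.integral_of_le hlb]
    apply setIntegral_congr_fun measurableSet_Ioc
    intro x hx
    dsimp only
    have hzx : z ≤ x := by
      rcases min_lt_iff.mp (lt_of_le_of_lt (le_max_right _ _) (hl ▸ hx.1)) with h | h
      · linarith [hx.2]
      · exact h.le
    rw [abs_of_nonpos (by linarith)]
    have key : Real.exp (-ε * -(z - x) / b) * Real.exp (-θ * x)
        = Real.exp (ε * z / b) * Real.exp (-(ε / b + θ) * x) := by
      rw [← Real.exp_add, ← Real.exp_add]; congr 1; field_simp; ring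
    calc Real.exp (-ε * -(z - x) / b) * (θ * Real.exp (-θ * x))
        = θ * (Real.exp (-ε * -(z - x) / b) * Real.exp (-θ * x)) := by ring
      _ = θ * (Real.exp (ε * z / b) * Real.exp (-(ε / b + θ) * x)) := by rw [key]
      _ = Real.exp (ε * z / b) * θ * Real.exp (-(ε / b + θ) * x) := by ring
  rw [e1, e2, intervalIntegral.integral_const_mul, intervalIntegral.integral_const_mul,
    int_exp_mul _ _ _ hc1, int_exp_mul _ _ _ (neg_ne_zero.mpr hc2)]
  have hy1 : ε / b - θ = (ε - b * θ) / b := by field_simp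
  have hy2 : -(ε / b + θ) = -((ε + b * θ) / b) := by field_simp
  have hxb : -(ε / b + θ) * b = -(b * θ + ε) := by
    rw [neg_mul, add_mul, div_mul_cancel₀ _ hb']
    ring
  rw [show (ε / b - θ) * l = l * ε / b - l * θ by ring,
    show (ε / b - θ) * 0 = (0:ℝ) by ring,
    hxb,
    show -(ε / b + θ) * l = -(l * θ + l * ε / b) by ring,
    show -ε * z / b - l * θ = -(ε * z / b + l * θ) by ring,
    show (ε * z - l * ε) / b - b * θ - l * θ - ε = ε * z / b - (l * ε / b + b * θ + l * θ + ε) by ring,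
    hy1,
    hy2]
  rw [show (Real.exp (-(b * θ + ε)) - Real.exp (-(l * θ + l * ε / b))) / (-((ε + b * θ) / b))
      = (Real.exp (-(l * θ + l * ε / b)) - Real.exp (-(b * θ + ε))) * b / (ε + b * θ) by
    rw [div_neg, ← neg_div, neg_sub, div_div_eq_mul_div]]
  simp only [Real.exp_add, Real.exp_sub, Real.exp_neg, Real.exp_zero]
  have hA := Real.exp_ne_zero (ε * z / b)
  have hB := Real.exp_ne_zero (l * θ)
  have hC := Real.exp_ne_zero (l * ε / b)
  have hD := Real.exp_ne_zero (b * θ)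
  have hE := Real.exp_ne_zero ε
  have h1 : b * θ - ε ≠ 0 := fun h => hne (by linarith)
  have h2 : b * θ + ε ≠ 0 := by positivity
  congr 1
  · field_simp
    ring
  · field_simp
    ring
end

section
/- Let d ≥ 1, R > 0 and σ₁, σ₂ > 0. For x ∈ ℝ^d and y ∈ {−1, 1} define G(x,y) ∈ ℝ^{d + d(d+1)/2} with blocks y·x and (σ₁/σ₂)·t₂(x), where t₂(x) collects the second-order monomials and the squared Euclidean distance of the t₂ blocks counts Σ_j (x_j² − x'_j²)² once and each (x_j x_k − x'_j x'_k)² with j < k twice. Then for all x, x' ∈ ℝ^d with ‖x‖₂ ≤ R and ‖x'‖₂ ≤ R and all y, y' ∈ {−1, 1}, one has ‖G(x,y) − G(x',y')‖₂² ≤ σ₂² / (2σ₁²) + 2R² + 2σ₁² R⁴ / σ₂². -/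
open scoped RealInnerProductSpace

/-!
Write `a = ‖x‖²`, `b = ‖x'‖²`, `u = ∑ⱼ xⱼ x'ⱼ`, `ε = y y' ∈ {±1}` and `c = (σ₁/σ₂)²`. The first block
contributes `a + b - 2εu`, and the weighted `t₂` block is the squared Frobenius distance of the outer
products `x xᵀ` and `x' x'ᵀ`, namely `a² + b² - 2u²`. The terms in `a, b` are bounded by `2R²` and
`2cR⁴`, while the remaining cross terms satisfy `-2εu - 2cu² ≤ 1/(2c) = σ₂²/(2σ₁²)` by completing
the square.
-/

open Finset

theorem Finset.sum_sum_eq_sum_diag_add_two_mul_sum_sum_Ioi {ι R : Type*} [Fintype ι]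
    [LinearOrder ι] [LocallyFiniteOrderTop ι] [LocallyFiniteOrderBot ι] [CommSemiring R]
    (F : ι → ι → R) (hF : ∀ j k, F j k = F k j) :
    ∑ j, ∑ k, F j k = ∑ j, F j j + 2 * ∑ j, ∑ k ∈ Ioi j, F j k := by
  have split_diag : ∀ j, ∑ k, F j k = F j j + ∑ k ∈ {j}ᶜ, F k j := fun j => by
    rw [Fintype.sum_eq_add_sum_compl j]
    simp only [hF j]
  rw [sum_congr rfl fun j _ => split_diag j, sum_add_distrib,
    ← sum_sum_Ioi_add_eq_sum_sum_off_diag, mul_sum]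
  congr 1
  refine sum_congr rfl fun j _ => ?_
  rw [mul_sum]
  exact sum_congr rfl fun k _ => by rw [hF k j, two_mul]

theorem Finset.sum_sq_mul_sub_mul {ι R : Type*} [Fintype ι] [CommRing R] (y y' : R)
    (a b : ι → R) :
    ∑ j, (y * a j - y' * b j) ^ 2
      = y ^ 2 * ∑ j, a j ^ 2 + y' ^ 2 * ∑ j, b j ^ 2 - 2 * (y * y') * ∑ j, a j * b j := by
  simp only [mul_sum, ← sum_add_distrib, ← sum_sub_distrib]
  exact sum_congr rfl fun j _ => by ring

theorem Finset.sum_sum_sq_mul_sub_mul {ι R : Type*} [Fintype ι] [CommRing R] (a b : ι → R) :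
    ∑ j, ∑ k, (a j * a k - b j * b k) ^ 2
      = (∑ j, a j ^ 2) ^ 2 + (∑ j, b j ^ 2) ^ 2 - 2 * (∑ j, a j * b j) ^ 2 := by
  rw [sq (∑ j, a j ^ 2), sq (∑ j, b j ^ 2), sq (∑ j, a j * b j), sum_mul_sum, sum_mul_sum,
    sum_mul_sum]
  simp only [mul_sum, ← sum_add_distrib, ← sum_sub_distrib]
  exact sum_congr rfl fun j _ => sum_congr rfl fun k _ => by ring

theorem sensitivity_bound_of_norm_sq_le {c ε R a b u : ℝ} (hc : 0 < c) (hε : ε ^ 2 = 1)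
    (ha₀ : 0 ≤ a) (hb₀ : 0 ≤ b) (ha : a ≤ R ^ 2) (hb : b ≤ R ^ 2) :
    a + b - 2 * ε * u + c * (a ^ 2 + b ^ 2 - 2 * u ^ 2)
      ≤ 1 / (2 * c) + 2 * R ^ 2 + 2 * c * R ^ 4 := by
  have cross : -2 * ε * u - 2 * c * u ^ 2 ≤ 1 / (2 * c) := by
    have hsq : 0 ≤ 2 * c * (u + ε / (2 * c)) ^ 2 := by positivity
    have expand : 2 * c * (u + ε / (2 * c)) ^ 2 = 2 * c * u ^ 2 + 2 * ε * u + 1 / (2 * c) := by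
      field_simp
      linear_combination hε
    linarith
  have ha₂ : a ^ 2 ≤ R ^ 4 := by simpa only [← pow_mul] using pow_le_pow_left₀ ha₀ ha 2
  have hb₂ : b ^ 2 ≤ R ^ 4 := by simpa only [← pow_mul] using pow_le_pow_left₀ hb₀ hb 2
  linarith [mul_le_mul_of_nonneg_left ha₂ hc.le, mul_le_mul_of_nonneg_left hb₂ hc.le]

theorem logistic_regression_sensitivity_general
    (d : ℕ) (R σ₁ σ₂ : ℝ) (hσ₁ : 0 < σ₁) (hσ₂ : 0 < σ₂)
    (x x' : EuclideanSpace ℝ (Fin d)) (y y' : ℝ)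
    (hy : y = -1 ∨ y = 1) (hy' : y' = -1 ∨ y' = 1)
    (hx : ‖x‖ ≤ R) (hx' : ‖x'‖ ≤ R) :
    ((∑ j, (y * x j - y' * x' j) ^ 2)
      + (σ₁ / σ₂) ^ 2 * (∑ j, (x j ^ 2 - x' j ^ 2) ^ 2
          + 2 * ∑ j, ∑ k ∈ Finset.Ioi j, (x j * x k - x' j * x' k) ^ 2))
      ≤ σ₂ ^ 2 / (2 * σ₁ ^ 2) + 2 * R ^ 2 + 2 * σ₁ ^ 2 * R ^ 4 / σ₂ ^ 2 := by
  have hy₂ : y ^ 2 = 1 := by rcases hy with rfl | rfl <;> norm_num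
  have hy'₂ : y' ^ 2 = 1 := by rcases hy' with rfl | rfl <;> norm_num
  have outer : ∑ j, (x j ^ 2 - x' j ^ 2) ^ 2
      + 2 * ∑ j, ∑ k ∈ Ioi j, (x j * x k - x' j * x' k) ^ 2
      = ∑ j, ∑ k, (x j * x k - x' j * x' k) ^ 2 := by
    rw [sum_sum_eq_sum_diag_add_two_mul_sum_sum_Ioi _ fun j k => by ring]
    simp only [sq (x _), sq (x' _)]
  rw [outer, sum_sum_sq_mul_sub_mul, sum_sq_mul_sub_mul, hy₂, hy'₂, one_mul, one_mul,
    ← EuclideanSpace.real_norm_sq_eq, ← EuclideanSpace.real_norm_sq_eq]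
  have hRHS : σ₂ ^ 2 / (2 * σ₁ ^ 2) + 2 * R ^ 2 + 2 * σ₁ ^ 2 * R ^ 4 / σ₂ ^ 2
      = 1 / (2 * (σ₁ / σ₂) ^ 2) + 2 * R ^ 2 + 2 * (σ₁ / σ₂) ^ 2 * R ^ 4 := by
    field_simp
  rw [hRHS]
  exact sensitivity_bound_of_norm_sq_le (by positivity) (by rw [mul_pow, hy₂, hy'₂, one_mul])
    (by positivity) (by positivity) (pow_le_pow_left₀ (norm_nonneg x) hx 2)
    (pow_le_pow_left₀ (norm_nonneg x') hx' 2)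

/-- Sensitivity bound for the approximate sufficient statistics of logistic
regression: G(x,y) has blocks y·x and (σ₁/σ₂)·t₂(x), and the squared
Euclidean distance is bounded by σ₂²/(2σ₁²) + 2R² + 2σ₁²R⁴/σ₂². -/
theorem logistic_regression_sensitivity
    (d : ℕ) (hd : 1 ≤ d) (R σ₁ σ₂ : ℝ) (hR : 0 < R) (hσ₁ : 0 < σ₁) (hσ₂ : 0 < σ₂)
    (x x' : EuclideanSpace ℝ (Fin d)) (y y' : ℝ)
    (hy : y = -1 ∨ y = 1) (hy' : y' = -1 ∨ y' = 1)
    (hx : ‖x‖ ≤ R) (hx' : ‖x'‖ ≤ R) :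
    ((∑ j, (y * x j - y' * x' j) ^ 2)
      + (σ₁ / σ₂) ^ 2 * (∑ j, (x j ^ 2 - x' j ^ 2) ^ 2
          + 2 * ∑ j, ∑ k ∈ Finset.Ioi j, (x j * x k - x' j * x' k) ^ 2))
      ≤ σ₂ ^ 2 / (2 * σ₁ ^ 2) + 2 * R ^ 2 + 2 * σ₁ ^ 2 * R ^ 4 / σ₂ ^ 2 :=
  logistic_regression_sensitivity_general d R σ₁ σ₂ hσ₁ hσ₂ x x' y y' hy hy' hx hx'
end
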